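/- For every flat ADT formula φ in negation normal form over an ADT signature of size n (measured as the total size of the signature: number of sorts and constructors with their arities), the reduct φ̃ produced by the reduction rules satisfies |φ̃| ∈ O(n · |φ|): every literal of φ is replaced by an expression whose size is linear in n, so for a fixed ADT the reduction increases formula size at most linearly. -/

import Mathlib

/-!
The reduct of a literal is a single `CtorSpec_f`, or a disjunction of `ExCtorSpec_g(x̃)` over some
constructors `g` of one sort. Both have size linear in the arity of the constructor, and the
arities of all constructors sum to at most `n`, so every literal's reduct has size `O(n)` and
`|φ*| ∈ O(n · |φ|)` by induction on `φ`. The range constraints cost a constant per variable, and a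
duplicate-free list of the variables of `φ` has length at most `|φ|`.
-/

structure ADTSig where
  numSorts : ℕ
  numCtors : ℕ
  ctorArgs : Fin numCtors → List (Fin numSorts)
  ctorRes : Fin numCtors → Fin numSorts

namespace ADTSig

/-- The size of a signature: the number of sorts and constructors, with their
arities. -/
def sigSize (S : ADTSig) : ℕ :=
  S.numSorts + ∑ f : Fin S.numCtors, (1 + (S.ctorArgs f).length)

inductive Term (S : ADTSig) : Fin S.numSorts → Type where
  | mk (f : Fin S.numCtors)
      (args : (i : Fin (S.ctorArgs f).length) → Term S ((S.ctorArgs f).get i)) :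
      Term S (S.ctorRes f)

/-- Literals of flat ADT formulas in NNF. -/
inductive Lit (S : ADTSig) (V : Fin S.numSorts → Type) where
  | ctorEq (f : Fin S.numCtors)
      (xs : (i : Fin (S.ctorArgs f).length) → V ((S.ctorArgs f).get i))
      (x0 : V (S.ctorRes f))
  | selEq (f : Fin S.numCtors) (j : Fin (S.ctorArgs f).length)
      (x : V (S.ctorRes f)) (y : V ((S.ctorArgs f).get j))
  | tst (f : Fin S.numCtors) (x : V (S.ctorRes f))
  | ntst (f : Fin S.numCtors) (x : V (S.ctorRes f))
  | eqv {σ : Fin S.numSorts} (x y : V σ)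
  | nev {σ : Fin S.numSorts} (x y : V σ)

inductive Formula (S : ADTSig) (V : Fin S.numSorts → Type) where
  | fls
  | lit (l : Lit S V)
  | and (φ ψ : Formula S V)
  | or (φ ψ : Formula S V)

variable {S : ADTSig} {V : Fin S.numSorts → Type}

/-- The number of sub-expressions of a literal. -/
def Lit.lsize : Lit S V → ℕ
  | .ctorEq f _ _ => 2 + (S.ctorArgs f).length
  | .selEq _ _ _ _ => 4
  | .tst _ _ => 2
  | .ntst _ _ => 2
  | .eqv _ _ => 3
  | .nev _ _ => 3

/-- The number of sub-expressions `|φ|` of a formula. -/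
def Formula.fsize : Formula S V → ℕ
  | .fls => 1
  | .lit l => 1 + l.lsize
  | .and φ ψ => 1 + φ.fsize + ψ.fsize
  | .or φ ψ => 1 + φ.fsize + ψ.fsize

def Lit.varList : Lit S V → List (Σ σ, V σ)
  | .ctorEq _ xs x0 => ⟨_, x0⟩ :: List.ofFn (fun i => ⟨_, xs i⟩)
  | .selEq _ _ x y => [⟨_, x⟩, ⟨_, y⟩]
  | .tst _ x => [⟨_, x⟩]
  | .ntst _ x => [⟨_, x⟩]
  | .eqv x y => [⟨_, x⟩, ⟨_, y⟩]
  | .nev x y => [⟨_, x⟩, ⟨_, y⟩]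

def Formula.varList : Formula S V → List (Σ σ, V σ)
  | .fls => []
  | .lit l => l.varList
  | .and φ ψ => φ.varList ++ ψ.varList
  | .or φ ψ => φ.varList ++ ψ.varList

/-! ### The target language: EUF+LIA syntax -/

/-- Integer-valued EUF+LIA expressions: free variables `x̃`, de Bruijn bound
variables (for the existential quantifiers of `ExCtorSpec`), integer literals,
and applications of the uninterpreted functions `f̃`, `f̃^j`, `ctorId_σ`,
`depth_σ`. -/
inductive RExpr (S : ADTSig) (V : Fin S.numSorts → Type) where
  | fvar (σ : Fin S.numSorts) (x : V σ)
  | bvar (k : ℕ)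
  | ilit (z : ℤ)
  | capp (f : Fin S.numCtors) (args : Fin (S.ctorArgs f).length → RExpr S V)
  | sapp (f : Fin S.numCtors) (j : ℕ) (e : RExpr S V)
  | cid (σ : Fin S.numSorts) (e : RExpr S V)
  | dep (σ : Fin S.numSorts) (e : RExpr S V)

/-- EUF+LIA formulas (with existential quantification over integers). -/
inductive RForm (S : ADTSig) (V : Fin S.numSorts → Type) where
  | tru
  | flsF
  | eq (a b : RExpr S V)
  | le (a b : RExpr S V)
  | lt (a b : RExpr S V)
  | not (φ : RForm S V)
  | and (φ ψ : RForm S V)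
  | or (φ ψ : RForm S V)
  | ex (φ : RForm S V)

/-- The number of sub-expressions of an expression. -/
def RExpr.esize : RExpr S V → ℕ
  | .fvar _ _ => 1
  | .bvar _ => 1
  | .ilit _ => 1
  | .capp _ args => 1 + ∑ i, (args i).esize
  | .sapp _ _ e => 1 + e.esize
  | .cid _ e => 1 + e.esize
  | .dep _ e => 1 + e.esize

/-- The number of sub-expressions `|φ̃|` of an EUF+LIA formula. -/
def RForm.fsize : RForm S V → ℕ
  | .tru => 1
  | .flsF => 1
  | .eq a b => 1 + a.esize + b.esize
  | .le a b => 1 + a.esize + b.esize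
  | .lt a b => 1 + a.esize + b.esize
  | .not φ => 1 + φ.fsize
  | .and φ ψ => 1 + φ.fsize + ψ.fsize
  | .or φ ψ => 1 + φ.fsize + ψ.fsize
  | .ex φ => 1 + φ.fsize

def bigAnd (l : List (RForm S V)) : RForm S V := l.foldr .and .tru
def bigOr (l : List (RForm S V)) : RForm S V := l.foldr .or .flsF

/-- The index `Id_f` of a constructor among the constructors of its sort. -/
def ctorIdx' (S : ADTSig) (f : Fin S.numCtors) : ℤ :=
  ((Finset.univ.filter
      (fun g : Fin S.numCtors => g ≤ f ∧ S.ctorRes g = S.ctorRes f)).card : ℤ)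

/-- The range constraint `In_σ(e)` as a formula: `0 ≤ e < |𝕋_σ|` if `𝕋_σ` is
finite, and `true` otherwise. -/
noncomputable def inF (σ : Fin S.numSorts) (e : RExpr S V) : RForm S V := by
  classical
  exact if Finite (S.Term σ) then
    .and (.le (.ilit 0) e) (.lt e (.ilit (Nat.card (S.Term σ))))
  else .tru

/-- `CtorSpec_f(e₀, es)` as a formula. -/
def ctorSpecF (f : Fin S.numCtors) (e0 : RExpr S V)
    (es : Fin (S.ctorArgs f).length → RExpr S V) : RForm S V :=
  .and (.eq (.capp f es) e0)
    (.and (.eq (.cid (S.ctorRes f) e0) (.ilit (ctorIdx' S f)))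
      (bigAnd ((List.finRange (S.ctorArgs f).length).map (fun j =>
        .and (.eq (.sapp f j.val e0) (es j))
          (.lt (.dep ((S.ctorArgs f).get j) (es j)) (.dep (S.ctorRes f) e0))))))

/-- Wrapping a formula into `k` existential quantifiers. -/
def exWrap : ℕ → RForm S V → RForm S V
  | 0, φ => φ
  | k + 1, φ => .ex (exWrap k φ)

/-- `ExCtorSpec_f(e)` as a formula. -/
noncomputable def exCtorSpecF (f : Fin S.numCtors) (e : RExpr S V) : RForm S V :=
  exWrap (S.ctorArgs f).length
    (.and (bigAnd ((List.finRange (S.ctorArgs f).length).map (fun j =>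
        inF ((S.ctorArgs f).get j) (.bvar j.val))))
      (ctorSpecF f e (fun j => .bvar j.val)))

/-- The constructors of a given sort. -/
def ctorsOf (S : ADTSig) (σ : Fin S.numSorts) : List (Fin S.numCtors) :=
  (List.finRange S.numCtors).filter (fun f => S.ctorRes f = σ)

/-- The reduct of a literal: reduction rules (1)–(6). -/
noncomputable def Lit.reduct : Lit S V → RForm S V
  | .ctorEq f xs x0 => ctorSpecF f (.fvar _ x0) (fun i => .fvar _ (xs i))
  | .selEq f j x y =>
      .and (.eq (.sapp f j.val (.fvar _ x)) (.fvar _ y))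
        (bigOr ((ctorsOf S (S.ctorRes f)).map (fun g => exCtorSpecF g (.fvar _ x))))
  | .tst f x => exCtorSpecF f (.fvar _ x)
  | .ntst f x =>
      bigOr (((ctorsOf S (S.ctorRes f)).filter (fun g => g ≠ f)).map
        (fun g => exCtorSpecF g (.fvar _ x)))
  | .eqv x y => .eq (.fvar _ x) (.fvar _ y)
  | .nev x y => .not (.eq (.fvar _ x) (.fvar _ y))

/-- The rewritten formula `φ*`. -/
noncomputable def Formula.reduct : Formula S V → RForm S V
  | .fls => .flsF
  | .lit l => l.reduct
  | .and φ ψ => .and φ.reduct ψ.reduct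
  | .or φ ψ => .or φ.reduct ψ.reduct

/-- The reduct `φ̃ = φ* ∧ ⋀_{x : σ ∈ vars(φ)} In_σ(x̃)`, with `xs` an
enumeration of the variables of `φ`. -/
noncomputable def reductFull (φ : Formula S V) (xs : List (Σ σ, V σ)) :
    RForm S V :=
  .and φ.reduct (bigAnd (xs.map (fun v => inF v.1 (.fvar v.1 v.2))))

lemma fsize_bigAnd (l : List (RForm S V)) :
    (bigAnd l).fsize = 1 + (l.map fun φ => φ.fsize + 1).sum := by
  induction l with
  | nil => rfl
  | cons φ l ih =>
    simp only [bigAnd, List.foldr_cons, RForm.fsize, List.map_cons, List.sum_cons] at ih ⊢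
    omega

lemma fsize_bigOr (l : List (RForm S V)) :
    (bigOr l).fsize = 1 + (l.map fun φ => φ.fsize + 1).sum := by
  induction l with
  | nil => rfl
  | cons φ l ih =>
    simp only [bigOr, List.foldr_cons, RForm.fsize, List.map_cons, List.sum_cons] at ih ⊢
    omega

lemma fsize_exWrap (k : ℕ) (φ : RForm S V) : (exWrap k φ).fsize = k + φ.fsize := by
  induction k with
  | zero => simp [exWrap]
  | succ k ih => simp only [exWrap, RForm.fsize, ih]; omega

lemma fsize_inF_le (σ : Fin S.numSorts) (e : RExpr S V) :
    (inF σ e).fsize ≤ 5 + 2 * e.esize := by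
  unfold inF
  split <;> simp only [RForm.fsize, RExpr.esize] <;> omega

lemma fsize_ctorSpecF {f : Fin S.numCtors} {e0 : RExpr S V}
    {es : Fin (S.ctorArgs f).length → RExpr S V}
    (h0 : e0.esize = 1) (hes : ∀ j, (es j).esize = 1) :
    (ctorSpecF f e0 es).fsize = 10 + 12 * (S.ctorArgs f).length := by
  simp only [ctorSpecF, RForm.fsize, RExpr.esize, fsize_bigAnd, List.map_map,
    ← Fin.sum_univ_def, Function.comp_apply, h0, hes, Finset.sum_const, Finset.card_univ,
    Fintype.card_fin, smul_eq_mul]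
  omega

lemma fsize_exCtorSpecF_le (f : Fin S.numCtors) {e : RExpr S V} (he : e.esize = 1) :
    (exCtorSpecF f e).fsize ≤ 21 * (1 + (S.ctorArgs f).length) := by
  have hin : ∀ j : Fin (S.ctorArgs f).length,
      (inF ((S.ctorArgs f).get j) (.bvar j.val : RExpr S V)).fsize + 1 ≤ 8 := fun j =>
    (fsize_inF_le _ _).trans_lt (by simp [RExpr.esize])
  have hsum := Finset.sum_le_card_nsmul Finset.univ _ 8 fun j _ => hin j
  simp only [Finset.card_univ, Fintype.card_fin, smul_eq_mul] at hsum
  have hspec := fsize_ctorSpecF (f := f) (es := fun j => .bvar j.val) he fun _ => rfl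
  simp only [exCtorSpecF, fsize_exWrap, RForm.fsize, fsize_bigAnd, List.map_map,
    ← Fin.sum_univ_def, Function.comp_apply, hspec]
  omega

lemma one_add_length_ctorArgs_le_sigSize (f : Fin S.numCtors) :
    1 + (S.ctorArgs f).length ≤ S.sigSize :=
  (Finset.single_le_sum (f := fun g => 1 + (S.ctorArgs g).length) (fun _ _ => Nat.zero_le _)
    (Finset.mem_univ f)).trans (Nat.le_add_left _ _)

lemma sum_map_one_add_length_ctorArgs_le_sigSize {l : List (Fin S.numCtors)}
    (hl : l.Sublist (List.finRange S.numCtors)) :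
    (l.map fun g => 1 + (S.ctorArgs g).length).sum ≤ S.sigSize := by
  have := (hl.map fun g => 1 + (S.ctorArgs g).length).sum_le_sum fun _ _ => Nat.zero_le _
  rw [← Fin.sum_univ_def] at this
  exact this.trans (Nat.le_add_left _ _)

lemma fsize_bigOr_exCtorSpecF_le {l : List (Fin S.numCtors)}
    (hl : l.Sublist (List.finRange S.numCtors)) {e : RExpr S V} (he : e.esize = 1) :
    (bigOr (l.map fun g => exCtorSpecF g e)).fsize ≤ 1 + 22 * S.sigSize := by
  have hle : (l.map fun g => (exCtorSpecF g e).fsize + 1).sum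
      ≤ (l.map fun g => 22 * (1 + (S.ctorArgs g).length)).sum :=
    List.sum_le_sum fun g _ => by have := fsize_exCtorSpecF_le g he; omega
  rw [List.sum_map_mul_left] at hle
  have := sum_map_one_add_length_ctorArgs_le_sigSize hl
  rw [fsize_bigOr, List.map_map, Function.comp_def]
  omega

lemma Lit.fsize_reduct_le (hn : 1 ≤ S.sigSize) (l : Lit S V) :
    l.reduct.fsize ≤ 28 * S.sigSize := by
  cases l with
  | ctorEq f xs x0 =>
    have := one_add_length_ctorArgs_le_sigSize f
    rw [Lit.reduct, fsize_ctorSpecF rfl fun _ => rfl]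
    omega
  | selEq f j x y =>
    have := fsize_bigOr_exCtorSpecF_le (l := ctorsOf S (S.ctorRes f)) List.filter_sublist
      (e := .fvar _ x) rfl
    simp only [Lit.reduct, RForm.fsize, RExpr.esize]
    omega
  | tst f x =>
    have := fsize_exCtorSpecF_le (V := V) f (e := .fvar _ x) rfl
    have := one_add_length_ctorArgs_le_sigSize f
    rw [Lit.reduct]
    omega
  | ntst f x =>
    have := fsize_bigOr_exCtorSpecF_le (l := (ctorsOf S (S.ctorRes f)).filter (· ≠ f))
      (List.filter_sublist.trans List.filter_sublist) (e := .fvar _ x) rfl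
    rw [Lit.reduct]
    omega
  | eqv x y => simp only [Lit.reduct, RForm.fsize, RExpr.esize]; omega
  | nev x y => simp only [Lit.reduct, RForm.fsize, RExpr.esize]; omega

lemma Formula.one_le_fsize (φ : Formula S V) : 1 ≤ φ.fsize := by
  cases φ <;> simp only [Formula.fsize] <;> omega

lemma Formula.fsize_reduct_le (hn : 1 ≤ S.sigSize) (φ : Formula S V) :
    φ.reduct.fsize ≤ 28 * S.sigSize * φ.fsize := by
  induction φ with
  | fls => simp only [Formula.reduct, Formula.fsize, RForm.fsize]; omega
  | lit l =>
    have := l.fsize_reduct_le hn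
    simp only [Formula.reduct, Formula.fsize]
    nlinarith
  | and φ ψ ihφ ihψ =>
    simp only [Formula.reduct, Formula.fsize, RForm.fsize]
    nlinarith
  | or φ ψ ihφ ihψ =>
    simp only [Formula.reduct, Formula.fsize, RForm.fsize]
    nlinarith

lemma Lit.length_varList_le_lsize (l : Lit S V) : l.varList.length ≤ l.lsize := by
  cases l <;> simp only [Lit.varList, Lit.lsize, List.length_cons, List.length_ofFn,
    List.length_nil] <;> omega

lemma Formula.length_varList_le_fsize (φ : Formula S V) : φ.varList.length ≤ φ.fsize := by
  induction φ with
  | fls => simp [Formula.varList, Formula.fsize]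
  | lit l =>
    have := l.length_varList_le_lsize
    simp only [Formula.varList, Formula.fsize]
    omega
  | and φ ψ ihφ ihψ | or φ ψ ihφ ihψ =>
    simp only [Formula.varList, Formula.fsize, List.length_append]
    omega

lemma fsize_reductFull_le (φ : Formula S V) (xs : List (Σ σ, V σ)) :
    (reductFull φ xs).fsize ≤ 2 + φ.reduct.fsize + 8 * xs.length := by
  have hsum := List.sum_le_card_nsmul
    (xs.map fun v => (inF v.1 (.fvar v.1 v.2) : RForm S V).fsize + 1) 8 fun _ hv => by
      obtain ⟨v, -, rfl⟩ := List.mem_map.1 hv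
      exact (fsize_inF_le _ _).trans_lt (by simp [RExpr.esize])
  simp only [List.length_map, smul_eq_mul] at hsum
  simp only [reductFull, RForm.fsize, fsize_bigAnd, List.map_map, Function.comp_def]
  omega

end ADTSig

open ADTSig in
/-- **Size increase of the reduction.** There is a constant `c` such that for
every ADT signature of size `n` and every flat formula `φ` in NNF (with `xs` a
duplicate-free enumeration of the variables of `φ`), the reduct `φ̃` satisfies
`|φ̃| ≤ c · n · |φ|`, i.e. `|φ̃| ∈ O(n · |φ|)`: for a fixed ADT the reduction
increases formula size at most linearly. -/
theorem reduct_size_linear :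
    ∃ c : ℕ, ∀ (S : ADTSig), 1 ≤ S.numSorts →
      ∀ (V : Fin S.numSorts → Type) (φ : Formula S V) (xs : List (Σ σ, V σ)),
      xs.Nodup → (∀ v, v ∈ xs ↔ v ∈ φ.varList) →
      (reductFull φ xs).fsize ≤ c * S.sigSize * φ.fsize := by
  refine ⟨38, fun S hS V φ xs hnd hmem => ?_⟩
  have hn : 1 ≤ S.sigSize := hS.trans (Nat.le_add_right _ _)
  have hxs : xs.length ≤ φ.fsize :=
    (hnd.subperm fun v hv => (hmem v).1 hv).length_le.trans φ.length_varList_le_fsize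
  have hfull := fsize_reductFull_le φ xs
  have hreduct := φ.fsize_reduct_le hn
  have hpos := φ.one_le_fsize
  nlinarith
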